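/- arXiv:2208.11286 — 3 statements merged into one kernel-verified Lean document; each statement's English description precedes it below -/
import Mathlib

section
/- There exists a universal constant C > 0 such that the following holds for all positive integers n and d. Given vectors a_1, ..., a_n in ℝ^d each satisfying ‖a_i‖_∞ ≤ 1, there exist signs x_1, ..., x_n ∈ {−1, +1} such that ‖∑_{i=1}^n x_i a_i‖_∞ ≤ C · √n · max{1, √(log(d/n))}. -/
/-!
Spencer's entropy (partial colouring) argument. Put `s = 10 √(n max(1, log(d/n)))`. For each row
`a_j`, Hoeffding's inequality makes the bucket `round (⟨a_j, x⟩ / s)` of a uniform `x ∈ {±1}ⁿ` so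
concentrated that its entropy is at most `8 exp (-s² / 16n) ≤ 3n / (10 d)`. By subadditivity of
entropy some joint bucket of all `d` rows holds at least `2ⁿ e^{-3n/10}` points of the cube, more
than fit in a Hamming ball of radius `n / 10`; so it contains `x, y` differing in more than `n / 10`
coordinates, and `(x - y) / 2` is a partial colouring with discrepancy at most `s / 2`. Colouring
the at most `9n / 10` remaining coordinates recursively, the bounds sum geometrically, because
`√(m max(1, log(d/m))) ≤ (799/800) √(n max(1, log(d/n)))` whenever `m ≤ 9n / 10`.
-/

open Finset Real

namespace Spencer

section Entropy

variable {Ω V : Type*} [Fintype Ω] [DecidableEq V]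

noncomputable def prob (f : Ω → V) (v : V) : ℝ := #{ω | f ω = v} / Fintype.card Ω

noncomputable def entropy (f : Ω → V) : ℝ := ∑ v ∈ univ.image f, negMulLog (prob f v)

lemma prob_nonneg (f : Ω → V) (v : V) : 0 ≤ prob f v := by
  unfold prob; positivity

lemma prob_le_one (f : Ω → V) (v : V) : prob f v ≤ 1 :=
  div_le_one_of_le₀ (mod_cast card_le_univ _) (Nat.cast_nonneg _)

lemma prob_pos {f : Ω → V} {v : V} (hv : v ∈ univ.image f) : 0 < prob f v := by
  obtain ⟨ω, -, rfl⟩ := mem_image.1 hv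
  have : 0 < #{ω' | f ω' = f ω} := card_pos.2 ⟨ω, by simp⟩
  have : 0 < Fintype.card Ω := Fintype.card_pos_iff.2 ⟨ω⟩
  unfold prob; positivity

lemma sum_comp_eq_card_mul (f : Ω → V) (g : V → ℝ) :
    ∑ ω, g (f ω) = Fintype.card Ω * ∑ v ∈ univ.image f, prob f v * g v := by
  rcases isEmpty_or_nonempty Ω with hΩ | hΩ
  · simp
  have : (Fintype.card Ω : ℝ) ≠ 0 := by positivity
  rw [sum_comp, mul_sum]
  refine sum_congr rfl fun v _ => ?_
  rw [prob, nsmul_eq_mul]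
  field_simp

lemma sum_prob [Nonempty Ω] (f : Ω → V) : ∑ v ∈ univ.image f, prob f v = 1 := by
  have h := sum_comp_eq_card_mul f fun _ => 1
  have : (Fintype.card Ω : ℝ) ≠ 0 := by positivity
  simp only [sum_const, card_univ, nsmul_eq_mul, mul_one] at h
  exact (mul_eq_left₀ this).1 h.symm

lemma sum_log_prob (f : Ω → V) :
    ∑ ω, log (prob f (f ω)) = -(Fintype.card Ω * entropy f) := by
  simp only [sum_comp_eq_card_mul f fun v => log (prob f v), entropy, negMulLog, neg_mul,
    sum_neg_distrib, mul_neg, neg_neg]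

/-- Gibbs' inequality. -/
lemma sum_log_le_sum_log_prob [Nonempty Ω] (f : Ω → V) {q : V → ℝ}
    (hq : ∀ v ∈ univ.image f, 0 < q v) (hq1 : ∑ v ∈ univ.image f, q v ≤ 1) :
    ∑ ω, log (q (f ω)) ≤ ∑ ω, log (prob f (f ω)) := by
  rw [sum_comp_eq_card_mul f fun v => log (q v), sum_comp_eq_card_mul f fun v => log (prob f v)]
  refine mul_le_mul_of_nonneg_left ?_ (Nat.cast_nonneg _)
  have key : ∀ v ∈ univ.image f,
      prob f v * log (q v) ≤ prob f v * log (prob f v) + (q v - prob f v) := by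
    intro v hv
    have hp := prob_pos hv
    have h := log_le_sub_one_of_pos (div_pos (hq v hv) hp)
    rw [log_div (hq v hv).ne' hp.ne'] at h
    have := mul_le_mul_of_nonneg_left h hp.le
    rw [mul_sub, mul_sub, mul_div_cancel₀ _ hp.ne'] at this
    linarith
  calc ∑ v ∈ univ.image f, prob f v * log (q v)
      ≤ ∑ v ∈ univ.image f, (prob f v * log (prob f v) + (q v - prob f v)) := sum_le_sum key
    _ = ∑ v ∈ univ.image f, prob f v * log (prob f v) + (∑ v ∈ univ.image f, q v - 1) := by
      rw [sum_add_distrib, sum_sub_distrib, sum_prob]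
    _ ≤ ∑ v ∈ univ.image f, prob f v * log (prob f v) := by linarith

/-- Subadditivity of entropy, via Gibbs' inequality against the product of the marginals. -/
theorem exists_exp_neg_sum_entropy_le_prob [Nonempty Ω] {J : Type*} [Fintype J]
    (Y : J → Ω → V) :
    ∃ ω, exp (-∑ j, entropy (Y j)) ≤ prob (fun ω j => Y j ω) (fun j => Y j ω) := by
  classical
  set Yall : Ω → J → V := fun ω j => Y j ω
  set q : (J → V) → ℝ := fun b => ∏ j, prob (Y j) (b j)
  have hq : ∀ b ∈ univ.image Yall, 0 < q b := by
    rintro _ hb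
    obtain ⟨ω, -, rfl⟩ := mem_image.1 hb
    exact prod_pos fun j _ => prob_pos (mem_image_of_mem _ (mem_univ ω))
  have hq1 : ∑ b ∈ univ.image Yall, q b ≤ 1 :=
    calc ∑ b ∈ univ.image Yall, q b
        ≤ ∑ b ∈ Fintype.piFinset fun j => univ.image (Y j), q b := by
          refine sum_le_sum_of_subset_of_nonneg ?_ fun b _ _ =>
            prod_nonneg fun j _ => prob_nonneg _ _
          intro b hb
          obtain ⟨ω, -, rfl⟩ := mem_image.1 hb
          exact Fintype.mem_piFinset.2 fun j => mem_image_of_mem _ (mem_univ ω)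
      _ = ∏ j, ∑ v ∈ univ.image (Y j), prob (Y j) v := (prod_univ_sum _ _).symm
      _ = 1 := by simp [sum_prob]
  have hlog_q : ∑ ω, log (q (Yall ω)) = ∑ _ω : Ω, -∑ j, entropy (Y j) := by
    simp only [q, Yall]
    rw [sum_congr rfl fun ω _ => log_prod fun j _ =>
      (prob_pos (mem_image_of_mem (Y j) (mem_univ ω))).ne', sum_comm]
    simp [sum_log_prob, mul_sum]
  obtain ⟨ω, -, hω⟩ := exists_le_of_sum_le univ_nonempty
    (hlog_q ▸ sum_log_le_sum_log_prob Yall hq hq1)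
  exact ⟨ω, (le_log_iff_exp_le (prob_pos (mem_image_of_mem _ (mem_univ ω)))).1 hω⟩

lemma negMulLog_le_sqrt {p : ℝ} (hp : 0 ≤ p) : negMulLog p ≤ √p := by
  rcases hp.eq_or_lt with rfl | hp
  · simp
  set q := √p
  have hq : 0 < q := sqrt_pos.2 hp
  have hpq : p = q ^ 2 := (sq_sqrt hp.le).symm
  -- `log y ≤ y / e` at `y = 1 / q`
  have hlog : -log q ≤ 1 / (exp 1 * q) := by
    have := log_le_sub_one_of_pos (x := 1 / (exp 1 * q)) (by positivity)
    rw [log_div one_ne_zero (by positivity), log_one, log_mul (exp_pos 1).ne' hq.ne',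
      log_exp] at this
    linarith
  have he : 2 ≤ exp 1 := by linarith [add_one_le_exp 1]
  rw [negMulLog, hpq, log_pow]
  calc -q ^ 2 * ((2 : ℕ) * log q) = 2 * q ^ 2 * (-log q) := by push_cast; ring
    _ ≤ 2 * q ^ 2 * (1 / (exp 1 * q)) := by gcongr
    _ = 2 / exp 1 * q := by field_simp
    _ ≤ q := mul_le_of_le_one_left hq.le ((div_le_one (exp_pos 1)).2 he)

lemma entropy_le_two_mul_sum_sqrt_prob [Nonempty Ω] (f : Ω → V) (v₀ : V) :
    entropy f ≤ 2 * ∑ v ∈ (univ.image f).erase v₀, √(prob f v) := by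
  have hsqrt : ∑ v ∈ (univ.image f).erase v₀, negMulLog (prob f v)
      ≤ ∑ v ∈ (univ.image f).erase v₀, √(prob f v) :=
    sum_le_sum fun v _ => negMulLog_le_sqrt (prob_nonneg f v)
  have hnonneg : 0 ≤ ∑ v ∈ (univ.image f).erase v₀, √(prob f v) :=
    sum_nonneg fun v _ => sqrt_nonneg _
  by_cases h₀ : v₀ ∈ univ.image f
  · have h₁ : negMulLog (prob f v₀) ≤ ∑ v ∈ (univ.image f).erase v₀, √(prob f v) :=
      calc negMulLog (prob f v₀) ≤ 1 - prob f v₀ := negMulLog_le_one_sub_self (prob_nonneg f v₀)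
        _ = ∑ v ∈ (univ.image f).erase v₀, prob f v := by
          rw [← sum_prob f, ← add_sum_erase _ _ h₀, add_sub_cancel_left]
        _ ≤ _ := sum_le_sum fun v _ => le_sqrt_self_iff.2 (prob_le_one f v)
    rw [entropy, ← add_sum_erase _ _ h₀]
    linarith
  · rw [erase_eq_of_notMem h₀] at hsqrt hnonneg ⊢
    rw [entropy]
    linarith

end Entropy

lemma sum_pow_natAbs_le {T : Finset ℤ} (hT : 0 ∉ T) {ρ : ℝ} (hρ0 : 0 ≤ ρ) (hρ1 : ρ < 1) :
    ∑ v ∈ T, ρ ^ v.natAbs ≤ 2 * ρ / (1 - ρ) := by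
  have hpos : ∀ v ∈ T, 0 < v.natAbs := fun v hv => Int.natAbs_pos.2 (ne_of_mem_of_not_mem hv hT)
  have hfib : ∀ k, #{v ∈ T | v.natAbs - 1 = k} ≤ 2 := by
    intro k
    refine (card_le_card fun v hv => ?_).trans (card_le_two (a := ((k + 1 : ℕ) : ℤ))
      (b := -((k + 1 : ℕ) : ℤ)))
    obtain ⟨hvT, hvk⟩ := mem_filter.1 hv
    have : v.natAbs = k + 1 := by have := hpos v hvT; omega
    simpa using Int.natAbs_eq_iff.1 this
  calc ∑ v ∈ T, ρ ^ v.natAbs = ρ * ∑ v ∈ T, ρ ^ (v.natAbs - 1) := by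
        rw [mul_sum]
        refine sum_congr rfl fun v hv => ?_
        rw [← pow_succ', Nat.sub_add_cancel (hpos v hv)]
    _ = ρ * ∑ k ∈ T.image (fun v => v.natAbs - 1), #{v ∈ T | v.natAbs - 1 = k} • ρ ^ k := by
        rw [sum_comp]
    _ ≤ ρ * ∑ k ∈ T.image (fun v => v.natAbs - 1), 2 * ρ ^ k := by
        gcongr with k
        rw [nsmul_eq_mul]
        gcongr
        exact_mod_cast hfib k
    _ ≤ ρ * (2 * (1 - ρ)⁻¹) := by
        rw [← mul_sum, ← tsum_geometric_of_lt_one hρ0 hρ1]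
        gcongr
        exact (summable_geometric_of_lt_one hρ0 hρ1).sum_le_tsum _ fun k _ => pow_nonneg hρ0 k
    _ = 2 * ρ / (1 - ρ) := by ring

lemma entropy_le_of_prob_le_pow {Ω : Type*} [Fintype Ω] [Nonempty Ω] (f : Ω → ℤ) {ρ : ℝ}
    (hρ0 : 0 ≤ ρ) (hρ1 : ρ < 1) (h : ∀ v ≠ 0, prob f v ≤ ρ ^ (2 * v.natAbs)) :
    entropy f ≤ 4 * ρ / (1 - ρ) :=
  calc entropy f ≤ 2 * ∑ v ∈ (univ.image f).erase 0, √(prob f v) :=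
        entropy_le_two_mul_sum_sqrt_prob f 0
    _ ≤ 2 * ∑ v ∈ (univ.image f).erase 0, ρ ^ v.natAbs := by
        gcongr with v hv
        rw [sqrt_le_left (by positivity), ← pow_mul, mul_comm]
        exact h v (ne_of_mem_erase hv)
    _ ≤ 2 * (2 * ρ / (1 - ρ)) := by
        gcongr
        exact sum_pow_natAbs_le (notMem_erase 0 _) hρ0 hρ1
    _ = 4 * ρ / (1 - ρ) := by ring

lemma abs_sub_le_one_of_round_eq {α : Type*} [Field α] [LinearOrder α] [IsStrictOrderedRing α]
    [FloorRing α] {u w : α} (h : round u = round w) : |u - w| ≤ 1 := by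
  have hu := abs_sub_round u
  have hw := abs_sub_round w
  rw [h] at hu
  calc |u - w| = |(u - round w) - (w - round w)| := by ring_nf
    _ ≤ |u - round w| + |w - round w| := abs_sub _ _
    _ ≤ 1 := by linarith

section Cube

variable {ι : Type*} [Fintype ι] [DecidableEq ι]

def boolSign (b : Bool) : ℝ := if b then 1 else -1

def signSum (a : ι → ℝ) (x : ι → Bool) : ℝ := ∑ i, boolSign (x i) * a i

lemma sum_exp_mul_signSum_le (a : ι → ℝ) (ha : ∀ i, |a i| ≤ 1) (h : ℝ) :
    ∑ x : ι → Bool, exp (h * signSum a x)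
      ≤ 2 ^ Fintype.card ι * exp (h ^ 2 * Fintype.card ι / 2) := by
  calc ∑ x : ι → Bool, exp (h * signSum a x)
      = ∏ i, ∑ b : Bool, exp (h * (boolSign b * a i)) := by
        rw [Fintype.prod_sum]
        simp only [signSum, mul_sum, exp_sum]
    _ = ∏ i, 2 * cosh (h * a i) := by
        simp only [Fintype.sum_bool, boolSign, cosh_eq, if_true, Bool.false_eq_true, if_false]
        congr! 1 with i
        ring_nf
    _ ≤ ∏ _i : ι, 2 * exp (h ^ 2 / 2) := by
        gcongr with i
        refine (cosh_le_exp_half_sq _).trans (exp_le_exp.2 ?_)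
        have : a i ^ 2 ≤ 1 := (sq_le_one_iff_abs_le_one _).2 (ha i)
        rw [mul_pow]
        nlinarith [sq_nonneg h]
    _ = 2 ^ Fintype.card ι * exp (h ^ 2 * Fintype.card ι / 2) := by
        rw [prod_const, card_univ, mul_pow, ← exp_nat_mul]
        ring_nf

/-- Hoeffding's inequality for a sum with uniformly random signs, as a count on the cube. -/
lemma card_signSum_ge_le (a : ι → ℝ) (ha : ∀ i, |a i| ≤ 1) {t : ℝ} (ht : 0 ≤ t) :
    (#{x | t ≤ signSum a x} : ℝ) ≤ 2 ^ Fintype.card ι * exp (-(t ^ 2 / (2 * Fintype.card ι))) := by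
  set n : ℝ := (Fintype.card ι : ℝ)
  set h := t / n
  have hsplit : exp (h ^ 2 * n / 2) = exp (-(t ^ 2 / (2 * n))) * exp (h * t) := by
    rw [← exp_add]
    congr 1
    rcases eq_or_ne n 0 with hn | hn
    · simp [h, hn]
    · simp only [h]
      field_simp
      ring
  have key :
      (#{x | t ≤ signSum a x} : ℝ) * exp (h * t) ≤ 2 ^ Fintype.card ι * exp (h ^ 2 * n / 2) :=
    calc (#{x | t ≤ signSum a x} : ℝ) * exp (h * t)
        = ∑ x ∈ {x | t ≤ signSum a x}, exp (h * t) := by rw [sum_const, nsmul_eq_mul]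
      _ ≤ ∑ x ∈ {x | t ≤ signSum a x}, exp (h * signSum a x) := by
          gcongr with x hx
          exact (mem_filter.1 hx).2
      _ ≤ ∑ x, exp (h * signSum a x) :=
          sum_le_sum_of_subset_of_nonneg (filter_subset _ _) fun x _ _ => (exp_pos _).le
      _ ≤ _ := sum_exp_mul_signSum_le a ha h
  rw [hsplit, ← mul_assoc] at key
  exact le_of_mul_le_mul_right key (exp_pos _)

lemma prob_round_signSum_div_le (a : ι → ℝ) (ha : ∀ i, |a i| ≤ 1) {s : ℝ} (hs : 0 < s)
    {v : ℤ} (hv : v ≠ 0) :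
    prob (fun x => round (signSum a x / s)) v
      ≤ exp (-(((|v| - 1 / 2) * s) ^ 2 / (2 * Fintype.card ι))) := by
  have hv1 : (1 : ℝ) ≤ |(v : ℝ)| := by rw [← Int.cast_abs]; exact_mod_cast Int.one_le_abs hv
  have hv' : (0 : ℝ) < |(v : ℝ)| := by linarith
  -- flip the signs of `a` so that the sum has to be large and positive
  set ε : ℝ := v / |(v : ℝ)|
  have hε : |ε| = 1 := by simp [ε, abs_div, hv'.ne']
  have hεv : ε * v = |(v : ℝ)| := by
    rw [div_mul_eq_mul_div, ← sq, ← sq_abs, sq, mul_self_div_self]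
  have hsub : ({x | round (signSum a x / s) = v} : Finset (ι → Bool))
      ⊆ ({x | (|(v : ℝ)| - 1 / 2) * s ≤ signSum (fun i => ε * a i) x} : Finset (ι → Bool)) := by
    intro x hx
    simp only [mem_filter, mem_univ, true_and] at hx ⊢
    have hround := abs_sub_round (signSum a x / s)
    rw [hx] at hround
    have hlow : |(v : ℝ)| - 1 / 2 ≤ ε * (signSum a x / s) := by
      have := neg_abs_le (ε * (signSum a x / s - v))
      rw [abs_mul, hε, one_mul] at this
      nlinarith
    have : signSum (fun i => ε * a i) x = ε * signSum a x := by
      simp only [signSum, mul_sum]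
      exact sum_congr rfl fun i _ => by ring
    rw [this, ← le_div_iff₀ hs, mul_div_assoc]
    exact hlow
  have hcount := card_signSum_ge_le (fun i => ε * a i)
    (fun i => by rw [abs_mul, hε, one_mul]; exact ha i)
    (t := (|(v : ℝ)| - 1 / 2) * s) (mul_nonneg (by linarith) hs.le)
  have hcard : (Fintype.card (ι → Bool) : ℝ) = 2 ^ Fintype.card ι := by simp
  rw [prob, hcard, div_le_iff₀ (by positivity), Int.cast_abs, mul_comm]
  exact (Nat.cast_le.2 (card_le_card hsub)).trans hcount

lemma entropy_round_signSum_div_le [Nonempty ι] (a : ι → ℝ) (ha : ∀ i, |a i| ≤ 1) {s : ℝ}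
    (hs0 : 0 < s) (hs : 16 * Fintype.card ι ≤ s ^ 2) :
    entropy (fun x => round (signSum a x / s)) ≤ 8 * exp (-(s ^ 2 / (16 * Fintype.card ι))) := by
  set n : ℝ := (Fintype.card ι : ℝ)
  have hn : 0 < n := Nat.cast_pos.2 Fintype.card_pos
  set ρ := exp (-(s ^ 2 / (16 * n)))
  have hρ : ρ ≤ 1 / 2 := by
    refine (exp_le_exp.2 ?_).trans exp_neg_one_lt_half.le
    rw [neg_le_neg_iff, le_div_iff₀ (by positivity)]
    linarith
  have htail : ∀ v ≠ 0, prob (fun x => round (signSum a x / s)) v ≤ ρ ^ (2 * v.natAbs) := by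
    intro v hv
    refine (prob_round_signSum_div_le a ha hs0 hv).trans ?_
    have hv1 : (1 : ℝ) ≤ |(v : ℝ)| := by rw [← Int.cast_abs]; exact_mod_cast Int.one_le_abs hv
    have hgap : ((|(v : ℝ)| - 1 / 2) * s) ^ 2 / (2 * n) - 2 * |(v : ℝ)| * (s ^ 2 / (16 * n))
        = s ^ 2 * ((|(v : ℝ)| - 1) * (|(v : ℝ)| - 1 / 4)) / (2 * n) := by
      field_simp
      ring
    have : 0 ≤ s ^ 2 * ((|(v : ℝ)| - 1) * (|(v : ℝ)| - 1 / 4)) / (2 * n) := by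
      have : 0 ≤ (|(v : ℝ)| - 1) * (|(v : ℝ)| - 1 / 4) := mul_nonneg (by linarith) (by linarith)
      positivity
    rw [← exp_nat_mul, exp_le_exp]
    push_cast [Nat.cast_natAbs, Int.cast_abs]
    linarith
  calc entropy (fun x => round (signSum a x / s)) ≤ 4 * ρ / (1 - ρ) :=
        entropy_le_of_prob_le_pow _ (exp_pos _).le (by linarith) htail
    _ ≤ 8 * ρ := by
        rw [div_le_iff₀ (by linarith)]
        nlinarith [exp_pos (-(s ^ 2 / (16 * n)))]

lemma sum_pow_hammingDist (x₀ : ι → Bool) (t : ℝ) :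
    ∑ x : ι → Bool, t ^ hammingDist x x₀ = (1 + t) ^ Fintype.card ι := by
  have hpow : ∀ x : ι → Bool, t ^ hammingDist x x₀ = ∏ i, if x i ≠ x₀ i then t else 1 := by
    intro x
    rw [← prod_filter, prod_const]
    rfl
  have hbool : ∀ c : Bool, ∑ b : Bool, (if b ≠ c then t else 1) = 1 + t := by
    intro c
    cases c <;> simp [add_comm]
  simp only [hpow]
  rw [← Fintype.prod_sum (fun i b => if b ≠ x₀ i then t else 1),
    prod_congr rfl fun i _ => hbool (x₀ i), prod_const, card_univ]

lemma exists_lt_hammingDist {B : Finset (ι → Bool)} {t : ℝ} (ht0 : 0 < t) (ht1 : t ≤ 1) (r : ℕ)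
    (hB : (1 + t) ^ Fintype.card ι < #B * t ^ r) : ∃ x ∈ B, ∃ y ∈ B, r < hammingDist x y := by
  by_contra! hclose
  rcases B.eq_empty_or_nonempty with rfl | ⟨x₀, hx₀⟩
  · simp only [card_empty, Nat.cast_zero, zero_mul] at hB
    exact hB.not_ge (by positivity)
  refine hB.not_ge ?_
  calc (#B : ℝ) * t ^ r = ∑ x ∈ B, t ^ r := by rw [sum_const, nsmul_eq_mul]
    _ ≤ ∑ x ∈ B, t ^ hammingDist x x₀ :=
        sum_le_sum fun x hx => pow_le_pow_of_le_one ht0.le ht1 (hclose x hx x₀ hx₀)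
    _ ≤ ∑ x, t ^ hammingDist x x₀ :=
        sum_le_sum_of_subset_of_nonneg (subset_univ _) fun _ _ _ => by positivity
    _ = (1 + t) ^ Fintype.card ι := sum_pow_hammingDist x₀ t

end Cube

lemma one_add_inv_eight_pow_lt {n : ℕ} (hn : 0 < n) :
    (1 + 1 / 8 : ℝ) ^ n < 2 ^ n * exp (-(3 / 10 * n)) * (1 / 8) ^ (n / 10) := by
  have hr : ((n / 10 : ℕ) : ℝ) ≤ n / 10 := by
    rw [le_div_iff₀ (by norm_num)]
    exact_mod_cast Nat.div_mul_le_self n 10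
  have hn' : (0 : ℝ) < n := Nat.cast_pos.2 hn
  have h98 : log (1 + 1 / 8) ≤ 1 / 8 := by
    linarith [log_le_sub_one_of_pos (x := 1 + 1 / 8) (by norm_num)]
  have h18 : log (1 / 8) = -(3 * log 2) := by
    rw [one_div, log_inv, show (8 : ℝ) = 2 ^ 3 by norm_num, log_pow]
    push_cast
    ring
  have hlog2 := log_two_gt_d9
  rw [← log_lt_log_iff (by positivity) (by positivity), log_mul (by positivity) (by positivity),
    log_mul (by positivity) (by positivity), log_pow, log_pow, log_pow, log_exp, h18]
  nlinarith [mul_le_mul_of_nonneg_right hr (by positivity : (0 : ℝ) ≤ 3 * log 2),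
    mul_le_mul_of_nonneg_left h98 hn'.le]

noncomputable def discBound (d n : ℕ) : ℝ := √(n : ℝ) * max 1 √(log ((d : ℝ) / n))

lemma discBound_nonneg (d n : ℕ) : 0 ≤ discBound d n := by
  unfold discBound
  positivity

lemma discBound_sq (d n : ℕ) : discBound d n ^ 2 = n * max 1 (log ((d : ℝ) / n)) := by
  have hmax : max 1 √(log ((d : ℝ) / n)) = √(max 1 (log ((d : ℝ) / n))) := by
    rw [(show Monotone Real.sqrt from fun _ _ h => sqrt_le_sqrt h).map_max, sqrt_one]
  rw [discBound, hmax, mul_pow, sq_sqrt (Nat.cast_nonneg _),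
    sq_sqrt (zero_le_one.trans (le_max_left _ _))]

lemma mul_max_one_log_div_le {d m n : ℝ} (hd : 0 ≤ d) (hm : 0 < m) (hmn : m ≤ n) :
    m * max 1 (log (d / m)) ≤ (2 * √(m * n) - m) * max 1 (log (d / n)) := by
  set X := max 1 (log (d / n))
  have hX : 1 ≤ X := le_max_left _ _
  have hn : 0 < n := hm.trans_le hmn
  have hnm : 0 ≤ log (n / m) := log_nonneg ((one_le_div hm).2 hmn)
  have hmax : max 1 (log (d / m)) ≤ X + log (n / m) := by
    refine max_le (by linarith) ?_
    rcases hd.eq_or_lt with rfl | hd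
    · simp only [zero_div, log_zero]
      linarith
    · rw [show d / m = d / n * (n / m) by field_simp, log_mul (by positivity) (by positivity)]
      linarith [le_max_right 1 (log (d / n))]
  have hmw : m * √(n / m) = √(m * n) := by
    rw [show m * n = m ^ 2 * (n / m) by field_simp, sqrt_mul (sq_nonneg m), sqrt_sq hm.le]
  -- `log (n / m) = 2 log √(n / m) ≤ 2 (√(n / m) - 1)`
  have hlog : m * log (n / m) ≤ 2 * (√(m * n) - m) := by
    have h := log_le_sub_one_of_pos (x := √(n / m)) (sqrt_pos.2 (by positivity))
    rw [log_sqrt (by positivity)] at h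
    nlinarith
  have hm_le : m ≤ √(m * n) := by
    rw [← hmw]
    exact le_mul_of_one_le_right hm.le (one_le_sqrt.2 ((one_le_div hm).2 hmn))
  nlinarith

lemma discBound_le_of_ten_mul_le (d : ℕ) {m n : ℕ} (h : 10 * m ≤ 9 * n) :
    discBound d m ≤ 799 / 800 * discBound d n := by
  rcases Nat.eq_zero_or_pos m with rfl | hm
  · simp only [discBound, Nat.cast_zero, sqrt_zero, zero_mul]
    exact mul_nonneg (by norm_num) (discBound_nonneg d n)
  rw [← pow_le_pow_iff_left₀ (discBound_nonneg d m)
    (mul_nonneg (by norm_num) (discBound_nonneg d n)) two_ne_zero, mul_pow, discBound_sq,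
    discBound_sq]
  have hmn : (10 : ℝ) * m ≤ 9 * n := by exact_mod_cast h
  have hkey := mul_max_one_log_div_le (Nat.cast_nonneg d) (Nat.cast_pos.2 hm) (by linarith)
  -- `2 √(m n) - m = n - (√n - √m)^2` and `√m ≤ (19/20) √n`
  have hgap : 2 * √((m : ℝ) * n) - m ≤ (799 / 800) ^ 2 * n := by
    have hu : 0 ≤ √(m : ℝ) := sqrt_nonneg _
    have hv : 0 ≤ √(n : ℝ) := sqrt_nonneg _
    have hu2 := sq_sqrt (Nat.cast_nonneg (α := ℝ) m)
    have hv2 := sq_sqrt (Nat.cast_nonneg (α := ℝ) n)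
    have huv : √(m : ℝ) ≤ 19 / 20 * √(n : ℝ) :=
      (pow_le_pow_iff_left₀ hu (by positivity) two_ne_zero).1 (by rw [mul_pow]; nlinarith)
    rw [sqrt_mul (Nat.cast_nonneg _)]
    nlinarith
  calc (m : ℝ) * max 1 (log ((d : ℝ) / m))
      ≤ (2 * √((m : ℝ) * n) - m) * max 1 (log ((d : ℝ) / n)) := hkey
    _ ≤ (799 / 800) ^ 2 * n * max 1 (log ((d : ℝ) / n)) :=
        mul_le_mul_of_nonneg_right hgap (zero_le_one.trans (le_max_left _ _))
    _ = (799 / 800) ^ 2 * (n * max 1 (log ((d : ℝ) / n))) := by ring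

lemma mul_exp_neg_max_one_log_le (d : ℕ) {n : ℕ} (hn : 0 < n) :
    (d : ℝ) * (8 * exp (-(25 / 4 * max 1 (log ((d : ℝ) / n))))) ≤ 3 / 10 * n := by
  set M := log ((d : ℝ) / n)
  have hn' : (0 : ℝ) < n := Nat.cast_pos.2 hn
  have hd : (d : ℝ) ≤ n * exp M := by
    rw [← div_le_iff₀' hn']
    exact le_exp_log _
  have hexp : exp (-(25 / 4 * max 1 M)) ≤ exp (-4) * exp (-M) := by
    rw [← exp_add, exp_le_exp]
    linarith [le_max_left 1 M, le_max_right 1 M]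
  have he4 : exp (-4) ≤ 3 / 80 := by
    have h27 : (2.7 : ℝ) ^ 4 ≤ exp 1 ^ 4 := by gcongr; linarith [exp_one_gt_d9]
    rw [exp_neg, inv_le_comm₀ (exp_pos _) (by norm_num), show (4 : ℝ) = (4 : ℕ) * 1 by norm_num,
      exp_nat_mul]
    norm_num at h27 ⊢
    linarith
  calc (d : ℝ) * (8 * exp (-(25 / 4 * max 1 M)))
      ≤ n * exp M * (8 * (exp (-4) * exp (-M))) := by gcongr
    _ = 8 * n * exp (-4) := by
        rw [show n * exp M * (8 * (exp (-4) * exp (-M))) = 8 * n * exp (-4) * (exp M * exp (-M))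
          by ring, ← exp_add, add_neg_cancel, exp_zero, mul_one]
    _ ≤ 3 / 10 * n := by nlinarith

lemma sum_dite_smul_eq {ι M : Type*} [Fintype ι] [AddCommGroup M] [Module ℝ M] (z : ι → ℝ)
    (y : {i // z i = 0} → ℝ) (a : ι → M) :
    ∑ i, (if h : z i = 0 then y ⟨i, h⟩ else z i) • a i = ∑ i, z i • a i + ∑ t, y t • a t := by
  rw [← Fintype.sum_subtype_add_sum_subtype (fun i => z i = 0),
    ← Fintype.sum_subtype_add_sum_subtype (fun i => z i = 0) (fun i => z i • a i)]
  have h₁ : ∑ t : {i // z i = 0}, (if h : z t = 0 then y ⟨t, h⟩ else z t) • a t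
      = ∑ t, y t • a t :=
    sum_congr rfl fun t _ => by simp only [dif_pos t.2, Subtype.coe_eta]
  have h₂ : ∑ t : {i // ¬z i = 0}, (if h : z t = 0 then y ⟨t, h⟩ else z t) • a t
      = ∑ t : {i // ¬z i = 0}, z t • a t :=
    sum_congr rfl fun t _ => by simp only [dif_neg t.2]
  have h₃ : ∑ t : {i // z i = 0}, z t • a t = 0 := sum_eq_zero fun t _ => by simp [t.2]
  rw [h₁, h₂, h₃]
  abel

section Coloring

variable {ι κ : Type*} [Fintype ι] [DecidableEq ι] [Fintype κ]

lemma exists_far_pair_round_eq [Nonempty ι] (a : ι → κ → ℝ) (ha : ∀ i j, |a i j| ≤ 1) {s : ℝ}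
    (hs0 : 0 < s) (hs : 16 * Fintype.card ι ≤ s ^ 2)
    (hent : Fintype.card κ * (8 * exp (-(s ^ 2 / (16 * Fintype.card ι)))) ≤
      3 / 10 * Fintype.card ι) :
    ∃ x y : ι → Bool, Fintype.card ι < 10 * hammingDist x y ∧
      ∀ j, round (signSum (fun i => a i j) x / s) = round (signSum (fun i => a i j) y / s) := by
  set n := Fintype.card ι
  set Y : κ → (ι → Bool) → ℤ := fun j x => round (signSum (fun i => a i j) x / s)
  have hH : ∑ j, entropy (Y j) ≤ 3 / 10 * n :=
    calc ∑ j, entropy (Y j) ≤ ∑ _j : κ, 8 * exp (-(s ^ 2 / (16 * n))) :=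
          sum_le_sum fun j _ => entropy_round_signSum_div_le _ (fun i => ha i j) hs0 hs
      _ = _ := by rw [sum_const, card_univ, nsmul_eq_mul]
      _ ≤ 3 / 10 * n := hent
  obtain ⟨x₀, hx₀⟩ := exists_exp_neg_sum_entropy_le_prob Y
  set B : Finset (ι → Bool) := {x | (fun j => Y j x) = fun j => Y j x₀}
  have hB : (2 : ℝ) ^ n * exp (-(3 / 10 * n)) ≤ #B := by
    have hprob : prob (fun x j => Y j x) (fun j => Y j x₀) = #B / 2 ^ n := by simp [prob, B, n]
    rw [hprob, le_div_iff₀ (by positivity)] at hx₀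
    rw [mul_comm]
    exact (mul_le_mul_of_nonneg_right (exp_le_exp.2 (neg_le_neg hH)) (by positivity)).trans hx₀
  obtain ⟨x, hx, y, hy, hxy⟩ := exists_lt_hammingDist (t := 1 / 8) (by norm_num) (by norm_num)
    (n / 10) ((one_add_inv_eight_pow_lt Fintype.card_pos).trans_le (by gcongr))
  refine ⟨x, y, by omega, fun j => ?_⟩
  exact (congrFun (mem_filter.1 hx).2 j).trans (congrFun (mem_filter.1 hy).2 j).symm

theorem exists_partial_coloring [Nonempty ι] (a : ι → κ → ℝ) (ha : ∀ i, ‖a i‖ ≤ 1) :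
    ∃ z : ι → ℝ, (∀ i, z i = 0 ∨ z i = 1 ∨ z i = -1) ∧
      Fintype.card ι < 10 * #{i | z i ≠ 0} ∧
      ‖∑ i, z i • a i‖ ≤ 5 * discBound (Fintype.card κ) (Fintype.card ι) := by
  set n := Fintype.card ι
  set d := Fintype.card κ
  have hn : 0 < n := Fintype.card_pos
  have hn' : (0 : ℝ) < n := Nat.cast_pos.2 hn
  have hX : (1 : ℝ) ≤ max 1 (log ((d : ℝ) / n)) := le_max_left _ _
  set s := 10 * discBound d n
  have hs2 : s ^ 2 = 100 * (n * max 1 (log ((d : ℝ) / n))) := by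
    rw [mul_pow, discBound_sq]
    norm_num
  have hs0 : 0 < s :=
    mul_pos (by norm_num) (mul_pos (sqrt_pos.2 hn') (one_pos.trans_le (le_max_left _ _)))
  have hs : 16 * (n : ℝ) ≤ s ^ 2 := by rw [hs2]; nlinarith
  have hent : (d : ℝ) * (8 * exp (-(s ^ 2 / (16 * n)))) ≤ 3 / 10 * n := by
    rw [show s ^ 2 / (16 * n) = 25 / 4 * max 1 (log ((d : ℝ) / n)) by rw [hs2]; field_simp; ring]
    exact mul_exp_neg_max_one_log_le d hn
  obtain ⟨x, y, hxy, hround⟩ := exists_far_pair_round_eq a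
    (fun i j => (norm_le_pi_norm (a i) j).trans (ha i)) hs0 hs hent
  refine ⟨fun i => (boolSign (x i) - boolSign (y i)) / 2, fun i => ?_, ?_, ?_⟩
  · simp only [boolSign]
    cases x i <;> cases y i <;> norm_num
  · convert hxy using 2
    refine congrArg card (filter_congr fun i _ => ?_)
    simp only [boolSign]
    cases x i <;> cases y i <;> norm_num
  · refine (pi_norm_le_iff_of_nonneg (mul_nonneg (by norm_num) (discBound_nonneg _ _))).2
      fun j => ?_
    have hcoord : (∑ i, ((boolSign (x i) - boolSign (y i)) / 2) • a i) j
        = (signSum (fun i => a i j) x - signSum (fun i => a i j) y) / 2 := by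
      simp only [signSum, Finset.sum_apply, Pi.smul_apply, smul_eq_mul, ← sum_sub_distrib,
        sum_div]
      exact sum_congr rfl fun i _ => by ring
    have hdiff := abs_sub_le_one_of_round_eq (hround j)
    rw [← sub_div, abs_div, abs_of_pos hs0, div_le_one hs0] at hdiff
    rw [hcoord, Real.norm_eq_abs, abs_div, abs_two]
    linarith

theorem exists_signs_norm_sum_le (a : ι → κ → ℝ) (ha : ∀ i, ‖a i‖ ≤ 1) :
    ∃ x : ι → ℝ, (∀ i, x i = 1 ∨ x i = -1) ∧
      ‖∑ i, x i • a i‖ ≤ 4000 * discBound (Fintype.card κ) (Fintype.card ι) := by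
  induction hn : Fintype.card ι using Nat.strong_induction_on generalizing ι with
  | _ n ih =>
  rcases isEmpty_or_nonempty ι with hι | hι
  · refine ⟨fun _ => 1, fun _ => Or.inl rfl, ?_⟩
    rw [univ_eq_empty, sum_empty, norm_zero]
    exact mul_nonneg (by norm_num) (discBound_nonneg _ _)
  obtain ⟨z, hz, hcard, hz_norm⟩ := exists_partial_coloring a ha
  let T := {i // z i = 0}
  have hn0 : 0 < n := hn ▸ Fintype.card_pos
  have hT : 10 * Fintype.card T ≤ 9 * n := by
    have hsum : #{i | z i = 0} + #{i | z i ≠ 0} = n :=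
      (card_filter_add_card_filter_not _).trans (card_univ.trans hn)
    rw [Fintype.card_subtype]
    omega
  obtain ⟨y, hy, hy_norm⟩ := ih _ (by omega) (fun t : T => a t) (fun t => ha t) rfl
  set x : ι → ℝ := fun i => if h : z i = 0 then y ⟨i, h⟩ else z i
  refine ⟨x, fun i => ?_, ?_⟩
  · by_cases h : z i = 0
    · simpa [x, h] using hy ⟨i, h⟩
    · simpa [x, h] using (hz i).resolve_left h
  rw [hn] at hz_norm
  calc ‖∑ i, x i • a i‖ ≤ ‖∑ i, z i • a i‖ + ‖∑ t : T, y t • a t‖ :=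
        sum_dite_smul_eq z y a ▸ norm_add_le _ _
    _ ≤ 5 * discBound (Fintype.card κ) n
          + 4000 * (799 / 800 * discBound (Fintype.card κ) n) := by
        gcongr
        exact hy_norm.trans (by gcongr; exact discBound_le_of_ten_mul_le _ hT)
    _ = 4000 * discBound (Fintype.card κ) n := by ring

end Coloring

end Spencer

/-- **Spencer's theorem.** There is a universal constant `C > 0` such that for all
positive integers `n, d` and vectors `a 1, …, a n` in `ℝ^d` with `‖a i‖_∞ ≤ 1`
(here `‖·‖` on `Fin d → ℝ` is the sup norm), there are signs `x i ∈ {±1}` with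
`‖∑ i, x i • a i‖_∞ ≤ C √n · max 1 √(log(d/n))`. -/
theorem spencer :
    ∃ C : ℝ, 0 < C ∧ ∀ (n d : ℕ), 0 < n → 0 < d →
      ∀ a : Fin n → (Fin d → ℝ), (∀ i, ‖a i‖ ≤ 1) →
        ∃ x : Fin n → ℝ, (∀ i, x i = 1 ∨ x i = -1) ∧
          ‖∑ i, x i • a i‖ ≤
            C * Real.sqrt n * max 1 (Real.sqrt (Real.log ((d : ℝ) / (n : ℝ)))) := by
  refine ⟨4000, by norm_num, fun n d _ _ a ha => ?_⟩
  obtain ⟨x, hx, hnorm⟩ := Spencer.exists_signs_norm_sum_le a ha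
  refine ⟨x, hx, ?_⟩
  simpa only [Spencer.discBound, Fintype.card_fin, mul_assoc] using hnorm
end

section
/- Let n ≥ 2 and let e_1, ..., e_n ∈ ℝ^n be the standard basis vectors. Define A_i := (1/2)(e_1 + e_i)(e_1 + e_i)ᵀ for i = 1, ..., n; each A_i is a symmetric rank-one positive semidefinite matrix with ‖A_i‖_op ≤ 2. Then for every choice of signs x ∈ {−1, +1}^n, ‖∑_{i=1}^n x_i A_i‖_op ≥ (1/2) √(n−1). -/
/-!
Each `A i` is `½ u uᵀ` with `u = e₀ + eᵢ` (indices start at `0`), a nonzero vector of Euclidean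
norm at most `2`; this gives symmetry, positivity, rank one and `‖A i‖ ≤ ‖u‖² / 2 ≤ 2`. For the
lower bound, look at the column of `∑ xᵢ Aᵢ` indexed by `0`: for `j ≠ 0` only `A j` contributes to
its `j`-th entry, which is therefore `xⱼ / 2`. So this column has Euclidean norm at least
`√(n - 1) / 2`, and the norm of a column bounds the operator norm from below.
-/

open MeasureTheory ProbabilityTheory

/-- Operator norm (largest singular value) of a real matrix, as the norm of the
induced linear map between Euclidean spaces. -/
noncomputable def opNorm {m n : Type*} [Fintype m] [Fintype n] [DecidableEq n]
    (M : Matrix m n ℝ) : ℝ :=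
  ‖LinearMap.toContinuousLinearMap (Matrix.toEuclideanLin M)‖

/-- Squared Frobenius norm of a real matrix. -/
noncomputable def frobNormSq {m n : Type*} [Fintype m] [Fintype n]
    (M : Matrix m n ℝ) : ℝ := ∑ i, ∑ j, (M i j) ^ 2

open Matrix WithLp
open scoped Matrix.Norms.L2Operator

namespace Matrix

variable {m n : Type*} [Fintype n] [DecidableEq n]

theorem rank_vecMulVec_eq_one {K : Type*} [Field K] {w : m → K} {v : n → K}
    (hw : w ≠ 0) (hv : v ≠ 0) : (vecMulVec w v).rank = 1 := by
  refine le_antisymm (rank_vecMulVec_le w v) ?_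
  obtain ⟨k, hk⟩ := Function.ne_iff.mp hv
  have hcol : vecMulVec w v *ᵥ Pi.single k 1 ≠ 0 := by
    rw [vecMulVec_mulVec, dotProduct_single_one, op_smul_eq_smul]
    exact smul_ne_zero hk hw
  rw [Nat.one_le_iff_ne_zero, rank, Ne, Submodule.finrank_eq_zero, Submodule.eq_bot_iff]
  push Not
  exact ⟨_, LinearMap.mem_range_self _ _, hcol⟩

variable [Fintype m] {𝕜 : Type*} [RCLike 𝕜]

theorem l2_opNorm_vecMulVec_le (w : m → 𝕜) (v : n → 𝕜) :
    ‖vecMulVec w v‖ ≤ ‖toLp 2 w‖ * ‖toLp 2 v‖ := by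
  rw [l2_opNorm_def]
  refine ContinuousLinearMap.opNorm_le_bound _ (by positivity) fun x => ?_
  have happly : (toEuclideanLin.trans LinearMap.toContinuousLinearMap (vecMulVec w v)) x
      = (v ⬝ᵥ ofLp x) • toLp 2 w := by
    simp [toLpLin_apply, vecMulVec_mulVec]
  have hdot : v ⬝ᵥ ofLp x = inner 𝕜 (toLp 2 (star v)) x := by
    rw [EuclideanSpace.inner_eq_star_dotProduct, dotProduct_comm, ofLp_toLp, star_star]
  have hstar : ‖toLp 2 (star v)‖ = ‖toLp 2 v‖ := by simp [EuclideanSpace.norm_eq]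
  calc ‖(toEuclideanLin.trans LinearMap.toContinuousLinearMap (vecMulVec w v)) x‖
      = ‖inner 𝕜 (toLp 2 (star v)) x‖ * ‖toLp 2 w‖ := by rw [happly, norm_smul, hdot]
    _ ≤ ‖toLp 2 v‖ * ‖x‖ * ‖toLp 2 w‖ := by
      gcongr
      exact hstar ▸ norm_inner_le_norm _ _
    _ = ‖toLp 2 w‖ * ‖toLp 2 v‖ * ‖x‖ := by ring

theorem norm_col_le_l2_opNorm (M : Matrix m n 𝕜) (k : n) : ‖toLp 2 (M.col k)‖ ≤ ‖M‖ := by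
  simpa [mulVec_single_one] using M.l2_opNorm_mulVec (EuclideanSpace.single k 1)

end Matrix

theorem opNorm_eq_l2_opNorm {m n : Type*} [Fintype m] [Fintype n] [DecidableEq n]
    (M : Matrix m n ℝ) : opNorm M = ‖M‖ := rfl

theorem opNorm_smul_vecMulVec_self_le {n : Type*} [Fintype n] [DecidableEq n] (c : ℝ)
    {u : n → ℝ} {r : ℝ} (hu : ‖toLp 2 u‖ ≤ r) : opNorm (c • vecMulVec u u) ≤ |c| * r ^ 2 := by
  rw [opNorm_eq_l2_opNorm, norm_smul, Real.norm_eq_abs, sq]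
  have hr : 0 ≤ r := (norm_nonneg _).trans hu
  grw [l2_opNorm_vecMulVec_le, hu, hu]

theorem card_sub_one_mul_sq_le_norm_sq {ι : Type*} [Fintype ι] {y : ι → ℝ} {c : ℝ} (k : ι)
    (hy : ∀ j ≠ k, |y j| = c) : ((Fintype.card ι : ℝ) - 1) * c ^ 2 ≤ ‖toLp 2 y‖ ^ 2 := by
  classical
  rw [EuclideanSpace.norm_sq_eq, ← Finset.sum_erase_add _ _ (Finset.mem_univ k)]
  have hoff : ∑ j ∈ Finset.univ.erase k, ‖y j‖ ^ 2 = ((Fintype.card ι : ℝ) - 1) * c ^ 2 := by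
    rw [Finset.sum_congr rfl fun j hj => by rw [Real.norm_eq_abs, hy j (Finset.ne_of_mem_erase hj)],
      Finset.sum_const, Finset.card_erase_of_mem (Finset.mem_univ k), Finset.card_univ,
      nsmul_eq_mul, Nat.cast_pred (Fintype.card_pos_iff.mpr ⟨k⟩)]
  rw [hoff]
  linarith [sq_nonneg ‖y k‖]

theorem sqrt_card_sub_one_mul_le_opNorm {ι : Type*} [Fintype ι] [DecidableEq ι]
    (M : Matrix ι ι ℝ) (k : ι) {c : ℝ} (hc : 0 ≤ c) (hM : ∀ j ≠ k, |M j k| = c) :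
    √((Fintype.card ι : ℝ) - 1) * c ≤ opNorm M :=
  calc √((Fintype.card ι : ℝ) - 1) * c = √(((Fintype.card ι : ℝ) - 1) * c ^ 2) := by
        rw [Real.sqrt_mul' _ (sq_nonneg c), Real.sqrt_sq hc]
    _ ≤ ‖toLp 2 (M.col k)‖ :=
        (Real.sqrt_le_left (norm_nonneg _)).mpr (card_sub_one_mul_sq_le_norm_sq k hM)
    _ ≤ opNorm M := norm_col_le_l2_opNorm M k

section SingleAddSingle

variable {ι : Type*} [DecidableEq ι]

theorem single_add_single_ne_zero {R : Type*} [AddMonoidWithOne R] [CharZero R] (k i : ι) :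
    (Pi.single k 1 + Pi.single i 1 : ι → R) ≠ 0 := by
  intro h
  have := congrFun h i
  by_cases hik : i = k <;> simp_all [one_add_one_eq_two]

variable [Fintype ι]

theorem norm_toLp_single_add_single_le (k i : ι) :
    ‖toLp 2 (Pi.single k 1 + Pi.single i 1 : ι → ℝ)‖ ≤ 2 := by
  calc _ ≤ ‖EuclideanSpace.single k (1 : ℝ)‖ + ‖EuclideanSpace.single i (1 : ℝ)‖ :=
        norm_add_le _ _
    _ = 2 := by norm_num

theorem sum_smul_smul_vecMulVec_single_add_single_apply {R : Type*} [CommRing R] {k j : ι}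
    (hj : j ≠ k) (x : ι → R) (c : R) :
    (∑ i, x i • c • vecMulVec (Pi.single k 1 + Pi.single i 1)
      (Pi.single k 1 + Pi.single i 1)) j k = c * x j := by
  simp [Matrix.sum_apply, vecMulVec_apply, Pi.single_apply, hj, hj.symm]
  ring

end SingleAddSingle

theorem rank_one_lower_bound_general (n : ℕ)
    (u : Fin n → Fin n → ℝ)
    (hu : ∀ i j, u i j = (if (j : ℕ) = 0 then (1 : ℝ) else 0) + (if j = i then 1 else 0))
    (A : Fin n → Matrix (Fin n) (Fin n) ℝ)
    (hA : ∀ i, A i = (1 / 2 : ℝ) • Matrix.vecMulVec (u i) (u i)) :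
    (∀ i, (A i).IsSymm) ∧ (∀ i, (A i).PosSemidef) ∧ (∀ i, (A i).rank = 1) ∧
    (∀ i, opNorm (A i) ≤ 2) ∧
    ∀ x : Fin n → ℝ, (∀ i, x i = 1 ∨ x i = -1) →
      (1 / 2 : ℝ) * Real.sqrt ((n : ℝ) - 1) ≤ opNorm (∑ i, x i • A i) := by
  obtain rfl | hn := Nat.eq_zero_or_pos n
  · refine ⟨finZeroElim, finZeroElim, finZeroElim, finZeroElim, fun x _ => ?_⟩
    -- here the bound is `√(0 - 1) / 2 = 0`, since `Real.sqrt` vanishes on negatives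
    simp [Real.sqrt_eq_zero_of_nonpos, opNorm]
  have : NeZero n := ⟨hn.ne'⟩
  have hu' : u = fun i => Pi.single 0 1 + Pi.single i 1 := by
    ext i j
    simp [hu, Pi.single_apply, Fin.val_eq_zero_iff]
  obtain rfl : A = fun i => (1 / 2 : ℝ) • vecMulVec (u i) (u i) := funext hA
  have hpsd : ∀ i, ((1 / 2 : ℝ) • vecMulVec (u i) (u i)).PosSemidef := fun i =>
    (by simpa using posSemidef_vecMulVec_self_star (u i) : PosSemidef _).smul (by norm_num)
  refine ⟨fun i => isHermitian_iff_isSymm.mp (hpsd i).isHermitian, hpsd, fun i => ?_,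
    fun i => ?_, fun x hx => ?_⟩
  · have hne : u i ≠ 0 := hu' ▸ single_add_single_ne_zero 0 i
    rw [rank_smul_of_mem_nonZeroDivisors _ (mem_nonZeroDivisors_of_ne_zero (by norm_num))]
    exact rank_vecMulVec_eq_one hne hne
  · have hnorm : ‖toLp 2 (u i)‖ ≤ 2 := hu' ▸ norm_toLp_single_add_single_le 0 i
    exact (opNorm_smul_vecMulVec_self_le _ hnorm).trans_eq (by norm_num)
  · subst hu'
    calc 1 / 2 * √(n - 1 : ℝ) = √((Fintype.card (Fin n) : ℝ) - 1) * (1 / 2) := by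
          rw [Fintype.card_fin, mul_comm]
      _ ≤ _ := sqrt_card_sub_one_mul_le_opNorm _ 0 (by norm_num) fun j hj => ?_
    rw [sum_smul_smul_vecMulVec_single_add_single_apply hj]
    rcases hx j with h | h <;> norm_num [h]

/-- **Lower bound example (Section 1.1).** For `n ≥ 2`, let `u i = e 1 + e i` (standard
basis vectors of `ℝⁿ`) and `A i = (1/2)(e 1 + e i)(e 1 + e i)ᵀ`. Then each `A i` is a
symmetric rank-one positive semidefinite matrix with `‖A i‖_op ≤ 2`, and for every
choice of signs `x ∈ {±1}ⁿ` one has `‖∑ i, x i • A i‖_op ≥ (1/2)√(n-1)`. -/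
theorem rank_one_lower_bound (n : ℕ) (hn : 2 ≤ n)
    (u : Fin n → Fin n → ℝ)
    (hu : ∀ i j, u i j = (if (j : ℕ) = 0 then (1 : ℝ) else 0) + (if j = i then 1 else 0))
    (A : Fin n → Matrix (Fin n) (Fin n) ℝ)
    (hA : ∀ i, A i = (1 / 2 : ℝ) • Matrix.vecMulVec (u i) (u i)) :
    (∀ i, (A i).IsSymm) ∧ (∀ i, (A i).PosSemidef) ∧ (∀ i, (A i).rank = 1) ∧
    (∀ i, opNorm (A i) ≤ 2) ∧
    ∀ x : Fin n → ℝ, (∀ i, x i = 1 ∨ x i = -1) →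
      (1 / 2 : ℝ) * Real.sqrt ((n : ℝ) - 1) ≤ opNorm (∑ i, x i • A i) :=
  rank_one_lower_bound_general n u hu A hA
end

section
/- Let S, P, Q ∈ ℝ^{m×m} be positive semidefinite symmetric matrices with S = P + Q. Let λ_1 ≥ λ_2 ≥ ... ≥ λ_m be the eigenvalues of S with corresponding orthonormal eigenvectors w_1, ..., w_m, and let 0 ≤ k < m. If w_jᵀ P w_j = 0 for all j = 1, ..., k, then ‖P‖_op ≤ λ_{k+1}. -/
/-!
Since `P` is positive semidefinite, `w jᵀ P w j = 0` forces `P w j = 0` for `j < k`. So for any `v`,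
`P v = P y` where `y` is the component of `v` along `w k, …, w (m-1)`, and, as `P ≤ S` in the
Loewner order, `vᵀ P v = yᵀ P y ≤ yᵀ S y ≤ λ_k ‖y‖² ≤ λ_k ‖v‖²`. For a positive operator such a
bound on the quadratic form bounds the operator norm.
-/

open MeasureTheory ProbabilityTheory

section

open RCLike ComplexConjugate
open scoped ComplexOrder

variable {𝕜 E ι : Type*} [RCLike 𝕜] [NormedAddCommGroup E] [InnerProductSpace 𝕜 E]

local notation "⟪" x ", " y "⟫" => inner 𝕜 x y

theorem ContinuousLinearMap.IsPositive.norm_le_of_re_inner_le {T : E →L[𝕜] E}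
    (hT : T.IsPositive) {c : ℝ} (hc : 0 ≤ c) (h : ∀ x, re ⟪T x, x⟫ ≤ c * ‖x‖ ^ 2) :
    ‖T‖ ≤ c := by
  rw [T.norm_eq_iSup_rayleighQuotient hT.isSymmetric]
  refine ciSup_le fun x => ?_
  rw [rayleighQuotient, reApplyInnerSelf_apply,
    abs_of_nonneg (div_nonneg (hT.re_inner_nonneg_left x) (sq_nonneg _))]
  exact div_le_of_le_mul₀ (sq_nonneg _) hc (h x)

theorem ContinuousLinearMap.IsPositive.nonneg_of_apply_eq_smul {S : E →L[𝕜] E}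
    (hS : S.IsPositive) {x : E} (hx : x ≠ 0) {μ : ℝ} (h : S x = (μ : 𝕜) • x) : 0 ≤ μ := by
  have hSx := hS.re_inner_nonneg_left x
  rw [h, inner_smul_left, conj_ofReal, re_ofReal_mul, inner_self_eq_norm_sq] at hSx
  exact (mul_nonneg_iff_of_pos_right (by positivity)).mp hSx

theorem Orthonormal.norm_sum_smul_sq {v : ι → E} (hv : Orthonormal 𝕜 v) (s : Finset ι)
    (a : ι → 𝕜) : ‖∑ i ∈ s, a i • v i‖ ^ 2 = ∑ i ∈ s, ‖a i‖ ^ 2 := by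
  rw [@norm_sq_eq_re_inner 𝕜, hv.inner_sum, map_sum]
  simp only [RCLike.conj_mul, ← ofReal_pow, ofReal_re]

theorem Orthonormal.re_inner_map_sum_smul_le {S : E →L[𝕜] E} {v : ι → E}
    (hv : Orthonormal 𝕜 v) {lam : ι → ℝ} (hS : ∀ i, S (v i) = (lam i : 𝕜) • v i)
    {s : Finset ι} {c : ℝ} (hc : ∀ i ∈ s, lam i ≤ c) (a : ι → 𝕜) :
    re ⟪S (∑ i ∈ s, a i • v i), ∑ i ∈ s, a i • v i⟫ ≤ c * ‖∑ i ∈ s, a i • v i‖ ^ 2 := by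
  have hSy : S (∑ i ∈ s, a i • v i) = ∑ i ∈ s, ((lam i : 𝕜) * a i) • v i := by
    simp only [map_sum, map_smul, hS, smul_smul, mul_comm]
  rw [hSy, hv.inner_sum, map_sum, hv.norm_sum_smul_sq, Finset.mul_sum]
  refine Finset.sum_le_sum fun i hi => ?_
  rw [map_mul (starRingEnd 𝕜), conj_ofReal, mul_assoc, re_ofReal_mul, RCLike.conj_mul,
    ← ofReal_pow, ofReal_re]
  exact mul_le_mul_of_nonneg_right (hc i hi) (sq_nonneg _)

theorem ContinuousLinearMap.norm_le_of_le_of_eigenbasis [Fintype ι] {T S : E →L[𝕜] E}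
    (hT : 0 ≤ T) (hTS : T ≤ S) (b : OrthonormalBasis ι 𝕜 E) {lam : ι → ℝ}
    (hS : ∀ i, S (b i) = (lam i : 𝕜) • b i) {c : ℝ} (hc : 0 ≤ c)
    (hlam : ∀ i, T (b i) ≠ 0 → lam i ≤ c) : ‖T‖ ≤ c := by
  classical
  rw [nonneg_iff_isPositive] at hT
  refine hT.norm_le_of_re_inner_le hc fun x => ?_
  set s := Finset.univ.filter fun i => T (b i) ≠ 0
  set y := ∑ i ∈ s, ⟪b i, x⟫ • b i
  have hTy : T y = T x := by
    conv_rhs => rw [← b.sum_repr' x]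
    simp only [y, s, map_sum, map_smul]
    exact Finset.sum_filter_of_ne fun i _ hi => right_ne_zero_of_smul hi
  have hquad : ⟪T x, x⟫ = ⟪T y, y⟫ := calc
    ⟪T x, x⟫ = ⟪T y, x⟫ := by rw [hTy]
    _ = ⟪y, T x⟫ := hT.inner_left_eq_inner_right y x
    _ = ⟪y, T y⟫ := by rw [hTy]
    _ = ⟪T y, y⟫ := (hT.inner_left_eq_inner_right y y).symm
  have hTSy : re ⟪T y, y⟫ ≤ re ⟪S y, y⟫ := by
    have := hTS.re_inner_nonneg_left y
    rwa [sub_apply, inner_sub_left, map_sub, sub_nonneg] at this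
  have hy : ‖y‖ ^ 2 ≤ ‖x‖ ^ 2 := by
    rw [b.orthonormal.norm_sum_smul_sq]
    exact b.orthonormal.sum_inner_products_le x
  calc re ⟪T x, x⟫ = re ⟪T y, y⟫ := by rw [hquad]
    _ ≤ re ⟪S y, y⟫ := hTSy
    _ ≤ c * ‖y‖ ^ 2 :=
      b.orthonormal.re_inner_map_sum_smul_le hS (fun i hi => hlam i (by simpa [s] using hi)) _
    _ ≤ c * ‖x‖ ^ 2 := by gcongr

theorem Matrix.PosSemidef.toEuclideanCLM_nonneg {n : Type*} [Fintype n] [DecidableEq n]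
    {A : Matrix n n 𝕜} (hA : A.PosSemidef) : 0 ≤ Matrix.toEuclideanCLM (n := n) (𝕜 := 𝕜) A :=
  (ContinuousLinearMap.nonneg_iff_isPositive _).mpr
    ((LinearMap.isPositive_toContinuousLinearMap_iff _).mpr
      (Matrix.isPositive_toEuclideanLin_iff.mpr hA))

end

theorem psd_summand_opNorm_le_eigenvalue_general (m : ℕ)
    (S P Q : Matrix (Fin m) (Fin m) ℝ)
    (hP : P.PosSemidef) (hQ : Q.PosSemidef)
    (hsum : S = P + Q)
    (lam : Fin m → ℝ) (w : Fin m → (Fin m → ℝ))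
    (heig : ∀ j, S.mulVec (w j) = lam j • w j)
    (hortho : ∀ j j' : Fin m, dotProduct (w j) (w j') = if j = j' then 1 else 0)
    (hdesc : ∀ j j' : Fin m, j ≤ j' → lam j' ≤ lam j)
    (k : ℕ) (hk : k < m)
    (hvanish : ∀ j : Fin m, (j : ℕ) < k → dotProduct (w j) (P.mulVec (w j)) = 0) :
    opNorm P ≤ lam ⟨k, hk⟩ := by
  set T := Matrix.toEuclideanCLM (n := Fin m) (𝕜 := ℝ)
  have hT : 0 ≤ T P := hP.toEuclideanCLM_nonneg
  have hTS : T P ≤ T S := by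
    rw [ContinuousLinearMap.le_def, ← map_sub, hsum, add_sub_cancel_left,
      ← ContinuousLinearMap.nonneg_iff_isPositive]
    exact hQ.toEuclideanCLM_nonneg
  have hon : Orthonormal ℝ fun j => WithLp.toLp 2 (w j) := by
    rw [orthonormal_iff_ite]
    simpa [EuclideanSpace.inner_eq_star_dotProduct, dotProduct_comm] using hortho
  let b : OrthonormalBasis (Fin m) ℝ (EuclideanSpace ℝ (Fin m)) :=
    .mk hon (hon.linearIndependent.span_eq_top_of_card_eq_finrank' (by simp)).ge
  have hb : ∀ j, T S (b j) = lam j • b j := fun j => by simp [T, b, heig]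
  have hker : ∀ j, T P (b j) ≠ 0 → lam j ≤ lam ⟨k, hk⟩ := by
    intro j hj
    refine hdesc _ _ (not_lt.mp fun hjk => hj ?_)
    have hPw := (hP.dotProduct_mulVec_zero_iff (w j)).mp (by simpa using hvanish j hjk)
    simp [T, b, hPw]
  have hlam : 0 ≤ lam ⟨k, hk⟩ :=
    ((ContinuousLinearMap.nonneg_iff_isPositive _).mp (hT.trans hTS)).nonneg_of_apply_eq_smul
      (b.orthonormal.ne_zero _) (hb _)
  exact ContinuousLinearMap.norm_le_of_le_of_eigenbasis hT hTS b hb hlam hker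

/-- **Linear-algebra step in Lemma 3.1.** Let `S = P + Q` with `S, P, Q` positive
semidefinite symmetric `m×m` matrices, let `lam 0 ≥ lam 1 ≥ … ≥ lam (m-1)` be the
eigenvalues of `S` with corresponding orthonormal eigenvectors `w j`, and let
`0 ≤ k < m`. If `w jᵀ P (w j) = 0` for all `j < k`, then `‖P‖_op ≤ lam k`
(the `(k+1)`-st eigenvalue in 1-based counting). -/
theorem psd_summand_opNorm_le_eigenvalue (m : ℕ)
    (S P Q : Matrix (Fin m) (Fin m) ℝ)
    (hS : S.PosSemidef) (hP : P.PosSemidef) (hQ : Q.PosSemidef)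
    (hsum : S = P + Q)
    (lam : Fin m → ℝ) (w : Fin m → (Fin m → ℝ))
    (heig : ∀ j, S.mulVec (w j) = lam j • w j)
    (hortho : ∀ j j' : Fin m, dotProduct (w j) (w j') = if j = j' then 1 else 0)
    (hdesc : ∀ j j' : Fin m, j ≤ j' → lam j' ≤ lam j)
    (k : ℕ) (hk : k < m)
    (hvanish : ∀ j : Fin m, (j : ℕ) < k → dotProduct (w j) (P.mulVec (w j)) = 0) :
    opNorm P ≤ lam ⟨k, hk⟩ :=
  psd_summand_opNorm_le_eigenvalue_general m S P Q hP hQ hsum lam w heig hortho hdesc k hk hvanish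
end
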